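/- For two autonomous affine models G: x_{k+1} = A x_k + f, y_k = C x_k and Ḡ: x̄_{k+1} = Ā x̄_k + f̄, ȳ_k = C̄ x̄_k, both with state dimension n, the following are equivalent: (i) Ḡ is not T-detectable for G for any finite T, i.e. for every T there exist initial states x_0, x̄_0 with y_k = ȳ_k for all k = 0,…,T−1; (ii) there exist initial states x_0, x̄_0 with y_k = ȳ_k for all k = 0,…,2n (i.e. Ḡ is not (2n+1)-detectable for G). Moreover, in that case the same pair of initial states yields y_k = ȳ_k for all k ∈ ℕ. -/

import Mathlib

/-
Homogenize: the pair of affine systems is the linear system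
`(x, x̄, t) ↦ (A x + t f, Ā x̄ + t f̄, t)` on a space of dimension `2n + 1`, started at
`(x₀, x̄₀, 1)`, and the output mismatch `C x - C̄ x̄` is a linear functional of its state.
By Cayley–Hamilton every power of an endomorphism of a space of dimension `N` is a polynomial
of degree `< N` in it, so a linear map vanishing on the first `N` iterates of a vector
vanishes on all of them.
-/

open Matrix

/-- Trajectory of the autonomous affine system `x_{k+1} = A x_k + f` from
initial state `x0`. -/
def affTraj {n : ℕ} (A : Matrix (Fin n) (Fin n) ℝ) (f : Fin n → ℝ)
    (x0 : Fin n → ℝ) : ℕ → Fin n → ℝ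
  | 0 => x0
  | k + 1 => A.mulVec (affTraj A f x0 k) + f

open Polynomial

namespace Module.End

variable {R W U : Type*} [CommRing R] [Nontrivial R] [AddCommGroup W] [Module R W]
  [Module.Finite R W] [Module.Free R W] [AddCommGroup U] [Module R U]

theorem map_pow_apply_eq_zero_of_forall_lt_finrank (L : Module.End R W) (φ : W →ₗ[R] U)
    (v : W) (h : ∀ k < Module.finrank R W, φ ((L ^ k) v) = 0) (k : ℕ) :
    φ ((L ^ k) v) = 0 := by
  set r := X ^ k %ₘ L.charpoly
  have hr : r.degree < Module.finrank R W := by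
    rw [← L.charpoly_natDegree, ← degree_eq_natDegree L.charpoly_monic.ne_zero]
    exact degree_modByMonic_lt _ L.charpoly_monic
  rw [LinearMap.pow_eq_aeval_mod_charpoly, aeval_eq_sum_range, LinearMap.sum_apply, map_sum]
  refine Finset.sum_eq_zero fun i _ => ?_
  rw [LinearMap.smul_apply, map_smul]
  rcases lt_or_ge i (Module.finrank R W) with hi | hi
  · rw [h i hi, smul_zero]
  · rw [coeff_eq_zero_of_degree_lt (hr.trans_le (by exact_mod_cast hi)), zero_smul]

end Module.End

section AffinePair

variable {n p : ℕ} (A Ab : Matrix (Fin n) (Fin n) ℝ) (C Cb : Matrix (Fin p) (Fin n) ℝ)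
  (f fb : Fin n → ℝ)

noncomputable def affinePairLift : Module.End ℝ ((Fin n → ℝ) × (Fin n → ℝ) × ℝ) where
  toFun w := (A *ᵥ w.1 + w.2.2 • f, Ab *ᵥ w.2.1 + w.2.2 • fb, w.2.2)
  map_add' u v := by
    ext <;> simp [mulVec_add, add_smul, add_add_add_comm]
  map_smul' c u := by
    ext <;> simp [mulVec_smul, smul_smul]

noncomputable def outputGap : ((Fin n → ℝ) × (Fin n → ℝ) × ℝ) →ₗ[ℝ] (Fin p → ℝ) where
  toFun w := C *ᵥ w.1 - Cb *ᵥ w.2.1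
  map_add' u v := by
    simp only [Prod.fst_add, Prod.snd_add, mulVec_add]
    abel
  map_smul' c u := by
    simp [mulVec_smul, smul_sub]

theorem affinePairLift_pow_apply (x0 xb0 : Fin n → ℝ) (k : ℕ) :
    (affinePairLift A Ab f fb ^ k) (x0, xb0, 1) =
      (affTraj A f x0 k, affTraj Ab fb xb0 k, 1) := by
  induction k with
  | zero => rfl
  | succ k ih =>
    rw [pow_succ', Module.End.mul_apply, ih]
    simp [affinePairLift, affTraj]

theorem outputGap_affinePairLift_pow_apply (x0 xb0 : Fin n → ℝ) (k : ℕ) :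
    outputGap C Cb ((affinePairLift A Ab f fb ^ k) (x0, xb0, 1)) =
      C *ᵥ affTraj A f x0 k - Cb *ᵥ affTraj Ab fb xb0 k := by
  rw [affinePairLift_pow_apply]
  rfl

theorem finrank_affinePairLift_space :
    Module.finrank ℝ ((Fin n → ℝ) × (Fin n → ℝ) × ℝ) = 2 * n + 1 := by
  simp only [Module.finrank_prod, Module.finrank_fin_fun, Module.finrank_self]
  ring

theorem affTraj_outputs_eq_of_forall_le (x0 xb0 : Fin n → ℝ)
    (h : ∀ k ≤ 2 * n, C *ᵥ affTraj A f x0 k = Cb *ᵥ affTraj Ab fb xb0 k) (k : ℕ) :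
    C *ᵥ affTraj A f x0 k = Cb *ᵥ affTraj Ab fb xb0 k := by
  have hgap := (affinePairLift A Ab f fb).map_pow_apply_eq_zero_of_forall_lt_finrank
    (outputGap C Cb) (x0, xb0, 1) (fun j hj => by
      rw [finrank_affinePairLift_space] at hj
      rw [outputGap_affinePairLift_pow_apply, h j (by omega), sub_self]) k
  rwa [outputGap_affinePairLift_pow_apply, sub_eq_zero] at hgap

end AffinePair

/-- corollary for affine models.  For two autonomous affine
models `G : x_{k+1} = A x_k + f, y_k = C x_k` and
`Ḡ : x̄_{k+1} = Ā x̄_k + f̄, ȳ_k = C̄ x̄_k` with state dimension `n`, the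
following are equivalent: (i) for every finite horizon `T` there are initial
states whose outputs coincide on `0, …, T-1`; (ii) there are initial states
whose outputs coincide on `0, …, 2n` (i.e. `Ḡ` is not `(2n+1)`-detectable for
`G`).  Moreover, in that case, the same pair of initial states yields matching
outputs for all times. -/
theorem affine_detectability_threshold {n p : ℕ}
    (A Ab : Matrix (Fin n) (Fin n) ℝ) (C Cb : Matrix (Fin p) (Fin n) ℝ)
    (f fb : Fin n → ℝ) :
    ((∀ T : ℕ, ∃ x0 xb0 : Fin n → ℝ, ∀ k < T,
        C.mulVec (affTraj A f x0 k) = Cb.mulVec (affTraj Ab fb xb0 k)) ↔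
      (∃ x0 xb0 : Fin n → ℝ, ∀ k ≤ 2 * n,
        C.mulVec (affTraj A f x0 k) = Cb.mulVec (affTraj Ab fb xb0 k))) ∧
    (∀ x0 xb0 : Fin n → ℝ,
      (∀ k ≤ 2 * n,
        C.mulVec (affTraj A f x0 k) = Cb.mulVec (affTraj Ab fb xb0 k)) →
      ∀ k : ℕ,
        C.mulVec (affTraj A f x0 k) = Cb.mulVec (affTraj Ab fb xb0 k)) := by
  have extend := affTraj_outputs_eq_of_forall_le A Ab C Cb f fb
  refine ⟨⟨fun h => ?_, fun ⟨x0, xb0, h⟩ T => ?_⟩, extend⟩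
  · obtain ⟨x0, xb0, hx⟩ := h (2 * n + 1)
    exact ⟨x0, xb0, fun k hk => hx k (by omega)⟩
  · exact ⟨x0, xb0, fun k _ => extend x0 xb0 h k⟩
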